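/- arXiv:2510.26290 — 5 statements merged into one kernel-verified Lean document; each statement's English description precedes it below -/
import Mathlib

section
/- Let ρ be a density matrix on ℂ^a ⊗ ℂ^b ⊗ ℂ^c (a positive semidefinite matrix of trace 1 indexed by triples from Fin a × Fin b × Fin c). Then ρ has stochastically localizable entanglement (SLE) on subsystems A and B — i.e., there exists a finite family of Kraus operators K^i = K_A^i ⊗ K_B^i ⊗ K_C^i (each K_A^i an a×a matrix, K_B^i a b×b matrix, K_C^i a c×c matrix) with Σ_i (K^i)†K^i ≤ I (in the Loewner order), such that T := Σ_i K^i ρ (K^i)† has tr(T) > 0 and the normalized partial trace over C, tr_C(T)/tr(T), is an entangled (not separable) state on ℂ^a ⊗ ℂ^b — if and only if there exists a unit vector ψ ∈ ℂ^c such that the a·b × a·b matrix σ with entries σ((i,j),(k,l)) = Σ_{m,n} conj(ψ(m)) · ρ((i,j,m),(k,l,n)) · ψ(n) has tr(σ) > 0 and σ/tr(σ) is entangled. -/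
/-!
A product Kraus operator `A ⊗ B ⊗ C` acts on the `AB` marginal as
`tr_C (K ρ K†) = ∑ₘ (A ⊗ B) σ_{ψₘ} (A ⊗ B)†`, where `σ_ψ = (1 ⊗ ⟨ψ|) ρ (1 ⊗ |ψ⟩)` and `ψₘ` is the
conjugate of the `m`-th row of `C`. Separable matrices form a convex cone stable under local
conjugations `A ⊗ B`, and `σ_{zψ} = |z|² σ_ψ`; so if every unit vector `ψ` leaves a separable
(or zero) `σ_ψ`, every stochastic local operation leaves a separable marginal. Conversely the
single Kraus operator `1 ⊗ 1 ⊗ |m⟩⟨ψ|` has `K†K = 1 ⊗ 1 ⊗ |ψ⟩⟨ψ| ≤ 1` and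
`tr_C (K ρ K†) = σ_ψ`.
-/

open Matrix BigOperators Kronecker ComplexOrder

noncomputable section

/-- A bipartite matrix on ℂ^a ⊗ ℂ^b is separable if it is a finite sum of Kronecker
products of rank-one matrices `xᵢxᵢ† ⊗ yᵢyᵢ†`. -/
def Separable {a b : ℕ} (σ : Matrix (Fin a × Fin b) (Fin a × Fin b) ℂ) : Prop :=
  ∃ (n : ℕ) (x : Fin n → Fin a → ℂ) (y : Fin n → Fin b → ℂ),
    σ = ∑ i, Matrix.of (fun p q : Fin a × Fin b =>
      (x i p.1 * (starRingEnd ℂ) (x i q.1)) * (y i p.2 * (starRingEnd ℂ) (y i q.2)))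

/-- The partial trace over the third subsystem. -/
def ptraceC {a b c : ℕ}
    (T : Matrix (Fin a × Fin b × Fin c) (Fin a × Fin b × Fin c) ℂ) :
    Matrix (Fin a × Fin b) (Fin a × Fin b) ℂ :=
  Matrix.of fun p q => ∑ m : Fin c, T (p.1, p.2, m) (q.1, q.2, m)

open scoped MatrixOrder

namespace Separable

variable {a b : ℕ} {σ τ : Matrix (Fin a × Fin b) (Fin a × Fin b) ℂ}

theorem iff_sum_kronecker : Separable σ ↔
    ∃ (n : ℕ) (x : Fin n → Fin a → ℂ) (y : Fin n → Fin b → ℂ),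
      σ = ∑ i, vecMulVec (x i) (star (x i)) ⊗ₖ vecMulVec (y i) (star (y i)) :=
  Iff.rfl

theorem zero : Separable (0 : Matrix (Fin a × Fin b) (Fin a × Fin b) ℂ) :=
  ⟨0, 0, 0, by simp⟩

theorem add (hσ : Separable σ) (hτ : Separable τ) : Separable (σ + τ) := by
  obtain ⟨n, x, y, rfl⟩ := hσ
  obtain ⟨m, u, v, rfl⟩ := hτ
  exact ⟨n + m, Fin.append x u, Fin.append y v, by simp [Fin.sum_univ_add]⟩

theorem sum {ι : Type*} {s : Finset ι} {f : ι → Matrix (Fin a × Fin b) (Fin a × Fin b) ℂ}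
    (h : ∀ i ∈ s, Separable (f i)) : Separable (∑ i ∈ s, f i) :=
  Finset.sum_induction f Separable (fun _ _ => add) zero h

theorem star_mul_self_smul (w : ℂ) (hσ : Separable σ) : Separable ((star w * w) • σ) := by
  obtain ⟨n, x, y, rfl⟩ := hσ
  refine ⟨n, fun i => w • x i, y, ?_⟩
  rw [Finset.smul_sum]
  refine Finset.sum_congr rfl fun i _ => ?_
  ext p q
  simp only [Matrix.smul_apply, of_apply, Pi.smul_apply, smul_eq_mul, map_mul, Complex.star_def]
  ring

theorem smul_of_nonneg {z : ℂ} (hz : 0 ≤ z) (hσ : Separable σ) : Separable (z • σ) := by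
  obtain ⟨w, rfl⟩ := CStarAlgebra.nonneg_iff_eq_star_mul_self.mp hz
  exact hσ.star_mul_self_smul w

theorem _root_.Matrix.PosSemidef.separable_of_inv_trace_smul (hσ : σ.PosSemidef)
    (h : 0 < σ.trace → Separable (σ.trace⁻¹ • σ)) : Separable σ := by
  rcases hσ.trace_nonneg.eq_or_lt with h0 | hpos
  · rw [hσ.trace_eq_zero_iff.mp h0.symm]
    exact zero
  · simpa [smul_smul, mul_inv_cancel₀ hpos.ne'] using smul_of_nonneg hpos.le (h hpos)

theorem kronecker_mul_mul_conjTranspose (A : Matrix (Fin a) (Fin a) ℂ)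
    (B : Matrix (Fin b) (Fin b) ℂ) (hσ : Separable σ) : Separable ((A ⊗ₖ B) * σ * (A ⊗ₖ B)ᴴ) := by
  obtain ⟨n, x, y, rfl⟩ := iff_sum_kronecker.mp hσ
  refine iff_sum_kronecker.mpr ⟨n, fun i => A *ᵥ x i, fun i => B *ᵥ y i, ?_⟩
  simp only [Finset.mul_sum, Finset.sum_mul, conjTranspose_kronecker, ← mul_kronecker_mul,
    mul_vecMulVec, vecMulVec_mul, star_mulVec]

end Separable

section Compress

variable {α β γ : Type*} [Fintype γ]

/-- `(1 ⊗ ⟨ψ|) ρ (1 ⊗ |ψ⟩)`; unfolded, this is the matrix `σ` of `sle_iff_exists_unit_vector`. -/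
def compressC (ρ : Matrix (α × β × γ) (α × β × γ) ℂ) (ψ : γ → ℂ) : Matrix (α × β) (α × β) ℂ :=
  of fun p q => ∑ m, ∑ n, (starRingEnd ℂ) (ψ m) * ρ (p.1, p.2, m) (q.1, q.2, n) * ψ n

theorem compressC_smul (ρ : Matrix (α × β × γ) (α × β × γ) ℂ) (z : ℂ) (ψ : γ → ℂ) :
    compressC ρ (z • ψ) = (star z * z) • compressC ρ ψ := by
  ext p q
  simp only [compressC, of_apply, Matrix.smul_apply, Pi.smul_apply, smul_eq_mul, Finset.mul_sum,
    map_mul, Complex.star_def]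
  exact Finset.sum_congr rfl fun _ _ => Finset.sum_congr rfl fun _ _ => by ring

theorem compressC_zero (ρ : Matrix (α × β × γ) (α × β × γ) ℂ) : compressC ρ 0 = 0 := by
  simpa using compressC_smul ρ 0 0

def embedC [DecidableEq α] [DecidableEq β] (ψ : γ → ℂ) : Matrix (α × β × γ) (α × β) ℂ :=
  of fun r p => if (r.1, r.2.1) = p then ψ r.2.2 else 0

variable [Fintype α] [Fintype β] [DecidableEq α] [DecidableEq β]

theorem conjTranspose_embedC_mul_mul_embedC (ρ : Matrix (α × β × γ) (α × β × γ) ℂ)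
    (ψ : γ → ℂ) :
    (embedC (α := α) (β := β) ψ)ᴴ * ρ * embedC (α := α) (β := β) ψ = compressC ρ ψ := by
  ext p q
  simp only [mul_apply, conjTranspose_apply, embedC, compressC, of_apply, Fintype.sum_prod_type]
  simp [Prod.ext_iff, apply_ite star, ite_and, Finset.sum_mul, mul_ite, ite_mul]
  exact Finset.sum_comm

theorem Matrix.PosSemidef.compressC {ρ : Matrix (α × β × γ) (α × β × γ) ℂ} (hρ : ρ.PosSemidef)
    (ψ : γ → ℂ) : (compressC ρ ψ).PosSemidef :=
  conjTranspose_embedC_mul_mul_embedC ρ ψ ▸ hρ.conjTranspose_mul_mul_same _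

theorem conjTranspose_embedC_single_mul_kronecker [DecidableEq γ] (A : Matrix α α ℂ)
    (B : Matrix β β ℂ) (C : Matrix γ γ ℂ) (m : γ) :
    (embedC (α := α) (β := β) (Pi.single m 1))ᴴ * (A ⊗ₖ (B ⊗ₖ C))
      = (A ⊗ₖ B) * (embedC (α := α) (β := β) (star (C m)))ᴴ := by
  ext p r
  simp only [mul_apply, conjTranspose_apply, embedC, of_apply, kroneckerMap_apply,
    Fintype.sum_prod_type]
  simp [Prod.ext_iff, apply_ite star, ite_and, Pi.single_apply, mul_ite, ite_mul, mul_assoc]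

end Compress

section PartialTrace

variable {a b c : ℕ}

theorem ptraceC_eq_sum_compressC (T : Matrix (Fin a × Fin b × Fin c) (Fin a × Fin b × Fin c) ℂ) :
    ptraceC T = ∑ m, compressC T (Pi.single m 1) := by
  ext p q
  simp [ptraceC, compressC, Matrix.sum_apply, Pi.single_apply]

theorem ptraceC_sum {ι : Type*} (s : Finset ι)
    (T : ι → Matrix (Fin a × Fin b × Fin c) (Fin a × Fin b × Fin c) ℂ) :
    ptraceC (∑ i ∈ s, T i) = ∑ i ∈ s, ptraceC (T i) := by
  ext p q
  simp only [ptraceC, of_apply, Matrix.sum_apply]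
  exact Finset.sum_comm

theorem trace_ptraceC (T : Matrix (Fin a × Fin b × Fin c) (Fin a × Fin b × Fin c) ℂ) :
    (ptraceC T).trace = T.trace := by
  simp [trace, ptraceC, Fintype.sum_prod_type]

theorem ptraceC_kronecker_mul_mul_conjTranspose (A : Matrix (Fin a) (Fin a) ℂ)
    (B : Matrix (Fin b) (Fin b) ℂ) (C : Matrix (Fin c) (Fin c) ℂ)
    (ρ : Matrix (Fin a × Fin b × Fin c) (Fin a × Fin b × Fin c) ℂ) :
    ptraceC ((A ⊗ₖ (B ⊗ₖ C)) * ρ * (A ⊗ₖ (B ⊗ₖ C))ᴴ)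
      = ∑ m, (A ⊗ₖ B) * compressC ρ (star (C m)) * (A ⊗ₖ B)ᴴ := by
  rw [ptraceC_eq_sum_compressC]
  refine Finset.sum_congr rfl fun m _ => ?_
  rw [← conjTranspose_embedC_mul_mul_embedC, ← conjTranspose_embedC_mul_mul_embedC]
  have h := conjTranspose_embedC_single_mul_kronecker A B C m
  have h' := congrArg conjTranspose h
  simp only [conjTranspose_mul, conjTranspose_conjTranspose] at h'
  simp only [← Matrix.mul_assoc, h]
  simp only [Matrix.mul_assoc, h']

end PartialTrace

theorem exists_unit_smul_eq {γ : Type*} [Fintype γ] {ψ : γ → ℂ} (hψ : ψ ≠ 0) :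
    ∃ (z : ℂ) (φ : γ → ℂ), ∑ m, Complex.normSq (φ m) = 1 ∧ ψ = z • φ := by
  set r := ∑ m, Complex.normSq (ψ m)
  have hr : 0 < r := by
    obtain ⟨m, hm⟩ := Function.ne_iff.mp hψ
    exact Finset.sum_pos' (fun m _ => Complex.normSq_nonneg _)
      ⟨m, Finset.mem_univ m, Complex.normSq_pos.mpr hm⟩
  have hs : (√r : ℂ) ≠ 0 := by exact_mod_cast (Real.sqrt_pos.mpr hr).ne'
  refine ⟨√r, (√r : ℂ)⁻¹ • ψ, ?_, by rw [smul_smul, mul_inv_cancel₀ hs, one_smul]⟩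
  simp only [Pi.smul_apply, smul_eq_mul, Complex.normSq_mul, ← Finset.mul_sum, ← Complex.ofReal_inv,
    Complex.normSq_ofReal]
  rw [← mul_inv, Real.mul_self_sqrt hr.le, inv_mul_cancel₀ hr.ne']

theorem IsStarProjection.kronecker {R m n : Type*} [CommSemiring R] [StarRing R] [Fintype m]
    [Fintype n] [DecidableEq m] [DecidableEq n] {P : Matrix m m R} {Q : Matrix n n R}
    (hP : IsStarProjection P) (hQ : IsStarProjection Q) : IsStarProjection (P ⊗ₖ Q) where
  isIdempotentElem := by
    rw [IsIdempotentElem, ← mul_kronecker_mul, hP.isIdempotentElem.eq, hQ.isIdempotentElem.eq]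
  isSelfAdjoint := by
    rw [IsSelfAdjoint, star_eq_conjTranspose, conjTranspose_kronecker, ← star_eq_conjTranspose,
      ← star_eq_conjTranspose, hP.isSelfAdjoint.star_eq, hQ.isSelfAdjoint.star_eq]

theorem isStarProjection_vecMulVec_star {γ : Type*} [Fintype γ] {ψ : γ → ℂ}
    (hψ : ∑ m, Complex.normSq (ψ m) = 1) : IsStarProjection (vecMulVec ψ (star ψ)) where
  isIdempotentElem := by
    have : star ψ ⬝ᵥ ψ = 1 := by
      simp only [dotProduct, Pi.star_apply, Complex.star_def, ← Complex.normSq_eq_conj_mul_self]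
      exact_mod_cast hψ
    rw [IsIdempotentElem, vecMulVec_mul_vecMulVec, this, one_smul]
  isSelfAdjoint := by
    rw [IsSelfAdjoint, star_eq_conjTranspose, conjTranspose_vecMulVec, star_star]

theorem conjTranspose_mul_self_vecMulVec_single {γ : Type*} [Fintype γ] [DecidableEq γ]
    {ψ : γ → ℂ} (m : γ) :
    (vecMulVec (Pi.single m 1) (star ψ))ᴴ * vecMulVec (Pi.single m 1) (star ψ) =
      vecMulVec ψ (star ψ) := by
  rw [conjTranspose_vecMulVec, vecMulVec_mul_vecMulVec, star_star]
  simp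

section Reduction

variable {a b c : ℕ}

theorem separable_compressC_of_forall_unit
    {ρ : Matrix (Fin a × Fin b × Fin c) (Fin a × Fin b × Fin c) ℂ} (hρ : ρ.PosSemidef)
    (h : ∀ φ : Fin c → ℂ, ∑ m, Complex.normSq (φ m) = 1 → 0 < (compressC ρ φ).trace →
      Separable ((compressC ρ φ).trace⁻¹ • compressC ρ φ))
    (ψ : Fin c → ℂ) : Separable (compressC ρ ψ) := by
  rcases eq_or_ne ψ 0 with rfl | hψ
  · rw [compressC_zero]
    exact Separable.zero
  obtain ⟨z, φ, hφ, rfl⟩ := exists_unit_smul_eq hψ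
  rw [compressC_smul]
  exact ((hρ.compressC φ).separable_of_inv_trace_smul (h φ hφ)).star_mul_self_smul z

theorem separable_ptraceC_of_forall_separable_compressC
    {ρ : Matrix (Fin a × Fin b × Fin c) (Fin a × Fin b × Fin c) ℂ}
    (h : ∀ ψ, Separable (compressC ρ ψ)) {n : ℕ} (A : Fin n → Matrix (Fin a) (Fin a) ℂ)
    (B : Fin n → Matrix (Fin b) (Fin b) ℂ) (C : Fin n → Matrix (Fin c) (Fin c) ℂ) :
    Separable (ptraceC (∑ i, (A i ⊗ₖ (B i ⊗ₖ C i)) * ρ * (A i ⊗ₖ (B i ⊗ₖ C i))ᴴ)) := by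
  rw [ptraceC_sum]
  simp only [ptraceC_kronecker_mul_mul_conjTranspose]
  exact Separable.sum fun i _ => Separable.sum fun m _ => (h _).kronecker_mul_mul_conjTranspose _ _

end Reduction

section SingleKraus

variable {a b c : ℕ} {ψ : Fin c → ℂ}

theorem ptraceC_one_kronecker_vecMulVec_single_mul_mul_conjTranspose
    (ρ : Matrix (Fin a × Fin b × Fin c) (Fin a × Fin b × Fin c) ℂ) (m : Fin c) :
    ptraceC ((1 ⊗ₖ (1 ⊗ₖ vecMulVec (Pi.single m 1) (star ψ))) * ρ *
      (1 ⊗ₖ (1 ⊗ₖ vecMulVec (Pi.single m 1) (star ψ)))ᴴ) = compressC ρ ψ := by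
  have hrow : ∀ k, star (vecMulVec (Pi.single m 1) (star ψ) k) =
      star (Pi.single (M := fun _ => ℂ) m 1 k) • ψ := by
    intro k
    ext s
    simp [vecMulVec_apply, mul_comm]
  simp only [ptraceC_kronecker_mul_mul_conjTranspose, hrow, compressC_smul, star_star,
    one_kronecker_one, conjTranspose_one, Matrix.one_mul, Matrix.mul_one, ← Finset.sum_smul]
  simp [Pi.single_apply]

theorem posSemidef_one_sub_conjTranspose_mul_self_one_kronecker_vecMulVec_single
    (hψ : ∑ m, Complex.normSq (ψ m) = 1) (m : Fin c) :
    (1 - (1 ⊗ₖ (1 ⊗ₖ vecMulVec (Pi.single m 1) (star ψ)))ᴴ *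
      ((1 : Matrix (Fin a) (Fin a) ℂ) ⊗ₖ ((1 : Matrix (Fin b) (Fin b) ℂ) ⊗ₖ
        vecMulVec (Pi.single m 1) (star ψ)))).PosSemidef := by
  rw [conjTranspose_kronecker, conjTranspose_kronecker, conjTranspose_one, conjTranspose_one,
    ← mul_kronecker_mul, ← mul_kronecker_mul, Matrix.one_mul, Matrix.one_mul,
    conjTranspose_mul_self_vecMulVec_single]
  exact nonneg_iff_posSemidef.mp ((IsStarProjection.one (R := Matrix (Fin a) (Fin a) ℂ)).kronecker
    ((IsStarProjection.one (R := Matrix (Fin b) (Fin b) ℂ)).kronecker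
      (isStarProjection_vecMulVec_star hψ))).one_sub_nonneg

end SingleKraus

theorem sle_iff_exists_unit_vector_general {a b c : ℕ}
    (ρ : Matrix (Fin a × Fin b × Fin c) (Fin a × Fin b × Fin c) ℂ)
    (hρ : ρ.PosSemidef) :
    (∃ (n : ℕ) (KA : Fin n → Matrix (Fin a) (Fin a) ℂ)
       (KB : Fin n → Matrix (Fin b) (Fin b) ℂ) (KC : Fin n → Matrix (Fin c) (Fin c) ℂ),
       (1 - ∑ i, (KA i ⊗ₖ (KB i ⊗ₖ KC i))ᴴ * (KA i ⊗ₖ (KB i ⊗ₖ KC i))).PosSemidef ∧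
       0 < (∑ i, (KA i ⊗ₖ (KB i ⊗ₖ KC i)) * ρ * (KA i ⊗ₖ (KB i ⊗ₖ KC i))ᴴ).trace ∧
       ¬ Separable
         (((∑ i, (KA i ⊗ₖ (KB i ⊗ₖ KC i)) * ρ * (KA i ⊗ₖ (KB i ⊗ₖ KC i))ᴴ).trace)⁻¹ •
           ptraceC (∑ i, (KA i ⊗ₖ (KB i ⊗ₖ KC i)) * ρ * (KA i ⊗ₖ (KB i ⊗ₖ KC i))ᴴ)))
    ↔
    (∃ ψ : Fin c → ℂ, (∑ m, Complex.normSq (ψ m)) = 1 ∧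
       0 < (Matrix.of (fun p q : Fin a × Fin b =>
              ∑ m, ∑ n, (starRingEnd ℂ) (ψ m) * ρ (p.1, p.2, m) (q.1, q.2, n) * ψ n)).trace ∧
       ¬ Separable
         (((Matrix.of (fun p q : Fin a × Fin b =>
              ∑ m, ∑ n, (starRingEnd ℂ) (ψ m) * ρ (p.1, p.2, m) (q.1, q.2, n) * ψ n)).trace)⁻¹ •
           Matrix.of (fun p q : Fin a × Fin b =>
              ∑ m, ∑ n, (starRingEnd ℂ) (ψ m) * ρ (p.1, p.2, m) (q.1, q.2, n) * ψ n))) := by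
  constructor
  · rintro ⟨n, KA, KB, KC, -, htr, hent⟩
    by_contra! hsep
    have hT := separable_ptraceC_of_forall_separable_compressC
      (separable_compressC_of_forall_unit hρ hsep) KA KB KC
    exact hent (hT.smul_of_nonneg (RCLike.inv_pos_of_pos htr).le)
  · rintro ⟨ψ, hψ, htr, hent⟩
    obtain ⟨m⟩ : Nonempty (Fin c) := by
      by_contra! h
      simp at hψ
    have hK := ptraceC_one_kronecker_vecMulVec_single_mul_mul_conjTranspose
      (a := a) (b := b) (ψ := ψ) ρ m
    have htrK := trace_ptraceC (a := a) (b := b) (c := c) _ ▸ congrArg trace hK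
    refine ⟨1, fun _ => 1, fun _ => 1, fun _ => vecMulVec (Pi.single m 1) (star ψ), ?_, ?_, ?_⟩
      <;> simp only [Fin.sum_univ_one]
    · exact posSemidef_one_sub_conjTranspose_mul_self_one_kronecker_vecMulVec_single hψ m
    · rwa [htrK]
    · rwa [htrK, hK]

/-- SLE verification criterion: a tripartite density matrix ρ has stochastically
localizable entanglement on subsystems A and B (via a finite family of product Kraus
operators with `∑ K†K ≤ I`, keeping the normalized reduced state on AB entangled)
iff there is a unit vector ψ on C whose projection leaves an entangled
normalized state on AB. -/
theorem sle_iff_exists_unit_vector {a b c : ℕ}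
    (ρ : Matrix (Fin a × Fin b × Fin c) (Fin a × Fin b × Fin c) ℂ)
    (hρ : ρ.PosSemidef) (htr : ρ.trace = 1) :
    (∃ (n : ℕ) (KA : Fin n → Matrix (Fin a) (Fin a) ℂ)
       (KB : Fin n → Matrix (Fin b) (Fin b) ℂ) (KC : Fin n → Matrix (Fin c) (Fin c) ℂ),
       (1 - ∑ i, (KA i ⊗ₖ (KB i ⊗ₖ KC i))ᴴ * (KA i ⊗ₖ (KB i ⊗ₖ KC i))).PosSemidef ∧
       0 < (∑ i, (KA i ⊗ₖ (KB i ⊗ₖ KC i)) * ρ * (KA i ⊗ₖ (KB i ⊗ₖ KC i))ᴴ).trace ∧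
       ¬ Separable
         (((∑ i, (KA i ⊗ₖ (KB i ⊗ₖ KC i)) * ρ * (KA i ⊗ₖ (KB i ⊗ₖ KC i))ᴴ).trace)⁻¹ •
           ptraceC (∑ i, (KA i ⊗ₖ (KB i ⊗ₖ KC i)) * ρ * (KA i ⊗ₖ (KB i ⊗ₖ KC i))ᴴ)))
    ↔
    (∃ ψ : Fin c → ℂ, (∑ m, Complex.normSq (ψ m)) = 1 ∧
       0 < (Matrix.of (fun p q : Fin a × Fin b =>
              ∑ m, ∑ n, (starRingEnd ℂ) (ψ m) * ρ (p.1, p.2, m) (q.1, q.2, n) * ψ n)).trace ∧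
       ¬ Separable
         (((Matrix.of (fun p q : Fin a × Fin b =>
              ∑ m, ∑ n, (starRingEnd ℂ) (ψ m) * ρ (p.1, p.2, m) (q.1, q.2, n) * ψ n)).trace)⁻¹ •
           Matrix.of (fun p q : Fin a × Fin b =>
              ∑ m, ∑ n, (starRingEnd ℂ) (ψ m) * ρ (p.1, p.2, m) (q.1, q.2, n) * ψ n))) :=
  sle_iff_exists_unit_vector_general ρ hρ
end
end

section
/- Let p ∈ [0,1], θ ∈ [0, π/2], φ ∈ ℝ, and let M = p·w w† + ((1−p)/4)·I₄ be the 4×4 matrix with w = cos θ·|00⟩ + sin θ·e^{−iφ}·|11⟩ ∈ ℂ⁴. Then the partial transpose M^{T₂} is positive semidefinite if and only if 2p·sin(2θ) ≤ 1 − p. In particular, for θ = π/4, M^{T₂} is positive semidefinite if and only if p ≤ 1/3. -/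
open Matrix BigOperators ComplexOrder

noncomputable section

/-- The rank-one matrix `x x†`. -/
def rankOne {n : Type*} (x : n → ℂ) : Matrix n n ℂ :=
  Matrix.of fun i j => x i * (starRingEnd ℂ) (x j)

/-- Partial transpose on the second factor of a bipartite matrix. -/
def pt2 {a b : ℕ} (M : Matrix (Fin a × Fin b) (Fin a × Fin b) ℂ) :
    Matrix (Fin a × Fin b) (Fin a × Fin b) ℂ :=
  Matrix.of fun p q => M (p.1, q.2) (q.1, p.2)

/-!
For `w = a |00⟩ + b |11⟩` the partial transpose of `p w w† + q I` leaves `|00⟩` and `|11⟩`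
invariant, with eigenvalues `p |a|² + q` and `p |b|² + q`, and acts on `span {|01⟩, |10⟩}` as
`[[q, p z], [p z̄, q]]` with `z = a b̄`, whose eigenvalues are `q ± p |z|`. For `p ≥ 0` it is
therefore positive semidefinite exactly when `p |a| |b| ≤ q`. For the noisy Bell state
`|a| |b| = cos θ sin θ = sin (2θ) / 2` and `q = (1 - p) / 4`.
-/

lemma rankOne_isHermitian {n : Type*} (x : n → ℂ) : (rankOne x).IsHermitian := by
  ext i j
  simp [rankOne, mul_comm]

lemma pt2_isHermitian {a b : ℕ} {M : Matrix (Fin a × Fin b) (Fin a × Fin b) ℂ}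
    (h : M.IsHermitian) : (pt2 M).IsHermitian := by
  ext ⟨i, j⟩ ⟨k, l⟩
  simpa [pt2, Matrix.conjTranspose_apply] using h.apply (i, l) (k, j)

section SchmidtForm

variable {p q : ℝ} {w : Fin 2 × Fin 2 → ℂ}

lemma dotProduct_pt2_mulVec (hw01 : w (0, 1) = 0) (hw10 : w (1, 0) = 0)
    (x : Fin 2 × Fin 2 → ℂ) :
    star x ⬝ᵥ (pt2 ((p : ℂ) • rankOne w + (q : ℂ) • 1) *ᵥ x) =
      ((p * (‖w (0, 0) * x (0, 0)‖ ^ 2 + ‖w (1, 1) * x (1, 1)‖ ^ 2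
        + 2 * (star (x (0, 1)) * x (1, 0) * (w (0, 0) * star (w (1, 1)))).re)
        + q * ∑ i, ‖x i‖ ^ 2 : ℝ) : ℂ) := by
  have hre (z : ℂ) : ((2 * z.re : ℝ) : ℂ) = z + star z := by
    rw [Complex.star_def, Complex.add_conj]
  have hsq (z : ℂ) : ((‖z‖ ^ 2 : ℝ) : ℂ) = star z * z := by
    rw [Complex.star_def, Complex.conj_mul']
    push_cast
    rfl
  push_cast [hre, hsq]
  simp only [dotProduct, Pi.star_apply, RCLike.star_def, mulVec, pt2, rankOne, smul_of,
    Complex.coe_smul, Matrix.add_apply, of_apply, Pi.smul_apply, Complex.real_smul,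
    Matrix.smul_apply, Matrix.one_apply, Prod.mk.injEq, smul_ite, mul_one, smul_zero,
    Fintype.sum_prod_type, Fin.sum_univ_two, Fin.isValue, and_true, one_ne_zero, and_false,
    ↓reduceIte, add_zero, hw10, map_zero, mul_zero, zero_add, ite_mul, zero_mul, hw01,
    zero_ne_one, star_mul', RingHomCompTriple.comp_apply, RingHom.id_apply]
  ring

theorem posSemidef_pt2_iff (hw01 : w (0, 1) = 0) (hw10 : w (1, 0) = 0) (hp : 0 ≤ p) :
    (pt2 ((p : ℂ) • rankOne w + (q : ℂ) • 1)).PosSemidef ↔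
      p * (‖w (0, 0)‖ * ‖w (1, 1)‖) ≤ q := by
  set z := w (0, 0) * star (w (1, 1)) with hz
  have hnz : ‖w (0, 0)‖ * ‖w (1, 1)‖ = ‖z‖ := by simp [hz]
  rw [hnz]
  constructor
  · intro h
    rcases eq_or_ne z 0 with hz0 | hz0
    · have hdiag := h.diag_nonneg (i := (0, 1))
      simp only [pt2, rankOne, smul_of, Complex.coe_smul, Matrix.add_apply, of_apply,
        Pi.smul_apply, Complex.real_smul, Matrix.smul_apply, hw01, map_zero, mul_zero,
        one_apply_eq, mul_one, zero_add, Complex.zero_le_real] at hdiag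
      rwa [hz0, norm_zero, mul_zero]
    -- an eigenvector of the block on `span {|01⟩, |10⟩}` for its eigenvalue `q - p |z|`
    set v : Fin 2 × Fin 2 → ℂ :=
      Pi.single (0, 1) 1 - Pi.single (1, 0) (star z / ‖z‖) with hv
    have hcross : (star (v (0, 1)) * v (1, 0) * z).re = -‖z‖ := by
      have hz0' : (‖z‖ : ℂ) ≠ 0 := by simpa using hz0
      have : star (v (0, 1)) * v (1, 0) * z = ((-‖z‖ : ℝ) : ℂ) := by
        simp only [hv, Pi.sub_apply, Pi.single_eq_same, RCLike.star_def, ne_eq, Prod.mk.injEq,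
          zero_ne_one, one_ne_zero, and_self, not_false_eq_true, Pi.single_eq_of_ne, sub_zero,
          star_one, zero_sub, mul_neg, one_mul, neg_mul, Complex.ofReal_neg, neg_inj]
        rw [div_mul_eq_mul_div, Complex.conj_mul']
        field_simp
      rw [this, Complex.ofReal_re]
    have hnorm : ∑ i, ‖v i‖ ^ 2 = 2 := by
      norm_num [hv, Fintype.sum_prod_type, Pi.single_apply, hz0]
    have hv00 : v (0, 0) = 0 := by simp [hv]
    have hv11 : v (1, 1) = 0 := by simp [hv]
    have hQ := h.dotProduct_mulVec_nonneg v
    rw [dotProduct_pt2_mulVec hw01 hw10, Complex.zero_le_real, hcross, hnorm, hv00, hv11] at hQ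
    simp only [mul_zero, norm_zero, ne_eq, OfNat.ofNat_ne_zero, not_false_eq_true, zero_pow,
      add_zero, zero_add] at hQ
    linarith
  · intro h
    refine .of_dotProduct_mulVec_nonneg (pt2_isHermitian ?_) fun x => ?_
    · exact ((rankOne_isHermitian w).smul (Complex.conj_ofReal p)).add
        (isHermitian_one.smul (Complex.conj_ofReal q))
    rw [dotProduct_pt2_mulVec hw01 hw10, Complex.zero_le_real]
    have hcross : -(‖z‖ * (‖x (0, 1)‖ ^ 2 + ‖x (1, 0)‖ ^ 2)) ≤
        2 * (star (x (0, 1)) * x (1, 0) * z).re := by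
      have hre := Complex.abs_re_le_norm (star (x (0, 1)) * x (1, 0) * z)
      rw [norm_mul, norm_mul, norm_star] at hre
      nlinarith [abs_le.mp hre, two_mul_le_add_sq ‖x (0, 1)‖ ‖x (1, 0)‖, norm_nonneg z]
    have hq : 0 ≤ q := (mul_nonneg hp (norm_nonneg z)).trans h
    simp only [Fintype.sum_prod_type, Fin.sum_univ_two]
    nlinarith [mul_nonneg hp (sq_nonneg ‖w (0, 0) * x (0, 0)‖),
      mul_nonneg hp (sq_nonneg ‖w (1, 1) * x (1, 1)‖), mul_le_mul_of_nonneg_left hcross hp,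
      mul_nonneg (sub_nonneg.mpr h)
        (add_nonneg (sq_nonneg ‖x (0, 1)‖) (sq_nonneg ‖x (1, 0)‖)),
      mul_nonneg hq (sq_nonneg ‖x (0, 0)‖), mul_nonneg hq (sq_nonneg ‖x (1, 1)‖)]

end SchmidtForm

theorem pt_noisy_bell_posSemidef_iff_general (p θ φ : ℝ)
    (hp0 : 0 ≤ p) (hθ0 : 0 ≤ θ) (hθ1 : θ ≤ Real.pi / 2)
    (w : Fin 2 × Fin 2 → ℂ)
    (hw : w = fun x => if x = (0, 0) then (Real.cos θ : ℂ)
      else if x = (1, 1) then (Real.sin θ : ℂ) * Complex.exp (-(Complex.I * (φ : ℂ))) else 0)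
    (M : Matrix (Fin 2 × Fin 2) (Fin 2 × Fin 2) ℂ)
    (hM : M = (p : ℂ) • rankOne w + (((1 - p) / 4 : ℝ) : ℂ) • 1) :
    ((pt2 M).PosSemidef ↔ 2 * p * Real.sin (2 * θ) ≤ 1 - p) ∧
    (θ = Real.pi / 4 → ((pt2 M).PosSemidef ↔ p ≤ 1 / 3)) := by
  have hcos : 0 ≤ Real.cos θ := Real.cos_nonneg_of_mem_Icc ⟨by linarith [Real.pi_pos], hθ1⟩
  have hsin : 0 ≤ Real.sin θ :=
    Real.sin_nonneg_of_nonneg_of_le_pi hθ0 (by linarith [Real.pi_pos])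
  have hw00 : ‖w (0, 0)‖ = Real.cos θ := by simp [hw, -Complex.ofReal_cos, abs_of_nonneg hcos]
  have hw11 : ‖w (1, 1)‖ = Real.sin θ := by
    simp [hw, -Complex.ofReal_sin, Complex.norm_exp, abs_of_nonneg hsin]
  have hpsd : (pt2 M).PosSemidef ↔ 2 * p * Real.sin (2 * θ) ≤ 1 - p := by
    rw [hM, posSemidef_pt2_iff (by simp [hw]) (by simp [hw]) hp0, hw00, hw11, Real.sin_two_mul]
    constructor <;> intro h <;> linarith
  refine ⟨hpsd, fun hθ => ?_⟩
  rw [hpsd, hθ, show 2 * (Real.pi / 4) = Real.pi / 2 by ring, Real.sin_pi_div_two]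
  constructor <;> intro h <;> linarith

/-- For `M = p w w† + ((1-p)/4) I₄` with `w = cos θ |00⟩ + sin θ e^{-iφ} |11⟩`,
the partial transpose `M^{T₂}` is positive semidefinite iff `2 p sin(2θ) ≤ 1 - p`;
in particular for `θ = π/4` iff `p ≤ 1/3`. -/
theorem pt_noisy_bell_posSemidef_iff (p θ φ : ℝ)
    (hp0 : 0 ≤ p) (hp1 : p ≤ 1) (hθ0 : 0 ≤ θ) (hθ1 : θ ≤ Real.pi / 2)
    (w : Fin 2 × Fin 2 → ℂ)
    (hw : w = fun x => if x = (0, 0) then (Real.cos θ : ℂ)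
      else if x = (1, 1) then (Real.sin θ : ℂ) * Complex.exp (-(Complex.I * (φ : ℂ))) else 0)
    (M : Matrix (Fin 2 × Fin 2) (Fin 2 × Fin 2) ℂ)
    (hM : M = (p : ℂ) • rankOne w + (((1 - p) / 4 : ℝ) : ℂ) • 1) :
    ((pt2 M).PosSemidef ↔ 2 * p * Real.sin (2 * θ) ≤ 1 - p) ∧
    (θ = Real.pi / 4 → ((pt2 M).PosSemidef ↔ p ≤ 1 / 3)) :=
  pt_noisy_bell_posSemidef_iff_general p θ φ hp0 hθ0 hθ1 w hw M hM
end
end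

section
/- Let p ∈ ℝ and let ρ_noise(p) be the noisy GHZ state on three qubits. Let H denote the entrywise (Hadamard) square of ρ_noise(p), i.e., H(x,y) = ρ_noise(p)(x,y)² for all index triples x, y. Then H = ((3p²+p)/8)·|G⁺⟩⟨G⁺| + ((p−p²)/8)·|G⁻⟩⟨G⁻| + ((1−p)²/64)·I₈, and tr(H) = (3p²+1)/8. Consequently the distilled noisy GHZ state ρ'_noise(p) := H/tr(H) equals ((3p²+p)/(3p²+1))·|G⁺⟩⟨G⁺| + ((p−p²)/(3p²+1))·|G⁻⟩⟨G⁻| + ((1−p)²/(8(3p²+1)))·I₈. -/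
open Matrix BigOperators

noncomputable section

/-- The GHZ vector `(|000⟩ + |111⟩)/√2`. -/
def Gplus : (Fin 2 × Fin 2 × Fin 2) → ℂ := fun x =>
  ((if x = (0, 0, 0) then 1 else 0) + (if x = (1, 1, 1) then 1 else 0)) / (Real.sqrt 2 : ℂ)

/-- The GHZ vector `(|000⟩ - |111⟩)/√2`. -/
def Gminus : (Fin 2 × Fin 2 × Fin 2) → ℂ := fun x =>
  ((if x = (0, 0, 0) then 1 else 0) - (if x = (1, 1, 1) then 1 else 0)) / (Real.sqrt 2 : ℂ)

/-- The noisy GHZ state `p |G⁺⟩⟨G⁺| + (1-p)/8 · I₈`. -/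
def rhoNoise (p : ℝ) :
    Matrix (Fin 2 × Fin 2 × Fin 2) (Fin 2 × Fin 2 × Fin 2) ℂ :=
  (p : ℂ) • rankOne Gplus + (((1 - p) / 8 : ℝ) : ℂ) • 1

lemma hs2 : ((Real.sqrt 2 : ℝ) : ℂ) * ((Real.sqrt 2 : ℝ) : ℂ) = 2 := by
  have := Real.mul_self_sqrt (by norm_num : (0:ℝ) ≤ 2)
  exact_mod_cast this

set_option maxHeartbeats 2000000 in
/-- The entrywise (Hadamard) square of the noisy GHZ state equals
`((3p²+p)/8)|G⁺⟩⟨G⁺| + ((p-p²)/8)|G⁻⟩⟨G⁻| + ((1-p)²/64) I₈`, with trace `(3p²+1)/8`;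
consequently the distilled state `H / tr H` equals
`((3p²+p)/(3p²+1))|G⁺⟩⟨G⁺| + ((p-p²)/(3p²+1))|G⁻⟩⟨G⁻| + ((1-p)²/(8(3p²+1))) I₈`. -/
theorem hadamard_square_noisy_ghz (p : ℝ)
    (H : Matrix (Fin 2 × Fin 2 × Fin 2) (Fin 2 × Fin 2 × Fin 2) ℂ)
    (hH : H = Matrix.of fun x y => (rhoNoise p x y) ^ 2) :
    H = (((3 * p ^ 2 + p) / 8 : ℝ) : ℂ) • rankOne Gplus
        + (((p - p ^ 2) / 8 : ℝ) : ℂ) • rankOne Gminus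
        + ((((1 - p) ^ 2) / 64 : ℝ) : ℂ) • 1 ∧
    H.trace = (((3 * p ^ 2 + 1) / 8 : ℝ) : ℂ) ∧
    (H.trace)⁻¹ • H =
      (((3 * p ^ 2 + p) / (3 * p ^ 2 + 1) : ℝ) : ℂ) • rankOne Gplus
        + (((p - p ^ 2) / (3 * p ^ 2 + 1) : ℝ) : ℂ) • rankOne Gminus
        + ((((1 - p) ^ 2) / (8 * (3 * p ^ 2 + 1)) : ℝ) : ℂ) • 1 := by
  have hne : ((Real.sqrt 2 : ℝ) : ℂ) ≠ 0 := Complex.ofReal_ne_zero.2 (by positivity)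
  have h2 : ((Real.sqrt 2 : ℝ) : ℂ) ^ 2 = 2 := by rw [sq, hs2]
  have h4 : ((Real.sqrt 2 : ℝ) : ℂ) ^ 4 = 4 := by
    rw [show (4:ℕ) = 2*2 from rfl, pow_mul, h2]; norm_num
  have h6 : ((Real.sqrt 2 : ℝ) : ℂ) ^ 6 = 8 := by
    calc ((Real.sqrt 2 : ℝ) : ℂ) ^ 6 = (((Real.sqrt 2 : ℝ) : ℂ) ^ 2) ^ 3 := by ring
    _ = 8 := by rw [h2]; norm_num
  have key : H = (((3 * p ^ 2 + p) / 8 : ℝ) : ℂ) • rankOne Gplus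
        + (((p - p ^ 2) / 8 : ℝ) : ℂ) • rankOne Gminus
        + ((((1 - p) ^ 2) / 64 : ℝ) : ℂ) • 1 := by
    subst hH
    ext ⟨i,j,k⟩ ⟨i',j',k'⟩
    simp only [rhoNoise, rankOne, Gplus, Gminus, Matrix.add_apply, Matrix.smul_apply,
      Matrix.of_apply, Matrix.one_apply, smul_eq_mul, map_div₀, map_add, map_sub,
      _root_.map_one, map_zero, Complex.conj_ofReal, apply_ite (starRingEnd ℂ)]
    fin_cases i <;> fin_cases j <;> fin_cases k <;> fin_cases i' <;> fin_cases j' <;> fin_cases k' <;>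
      norm_num [Prod.ext_iff] <;> field_simp
    all_goals try (left; norm_num)
    all_goals try (ring_nf; simp only [h2, h4, h6])
    all_goals ring
  have trP : (rankOne Gplus).trace = 1 := by
    simp [Matrix.trace, Matrix.diag, rankOne, Gplus, Fintype.sum_prod_type, Fin.sum_univ_two,
      Prod.ext_iff, Complex.conj_ofReal, map_div₀]
    rw [← mul_inv, hs2]; norm_num
  have trM : (rankOne Gminus).trace = 1 := by
    simp [Matrix.trace, Matrix.diag, rankOne, Gminus, Fintype.sum_prod_type, Fin.sum_univ_two,
      Prod.ext_iff, Complex.conj_ofReal, map_div₀]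
    have hinv : ((Real.sqrt 2 : ℝ) : ℂ)⁻¹ * ((Real.sqrt 2 : ℝ) : ℂ)⁻¹ = 1/2 := by
      rw [← mul_inv, hs2]; norm_num
    norm_num [div_mul_div_comm, ← mul_inv, hs2, hinv]
  have trI : Matrix.trace (1 : Matrix (Fin 2 × Fin 2 × Fin 2) (Fin 2 × Fin 2 × Fin 2) ℂ) = 8 := by
    simp [Matrix.trace]
  have htr : H.trace = (((3 * p ^ 2 + 1) / 8 : ℝ) : ℂ) := by
    rw [key]
    simp only [Matrix.trace_add, Matrix.trace_smul, trP, trM, trI, smul_eq_mul, mul_one]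
    push_cast
    ring
  refine ⟨key, htr, ?_⟩
  have h3 : (3 * p ^ 2 + 1 : ℝ) ≠ 0 := by positivity
  have e1 : ((((3 * p ^ 2 + 1) / 8 : ℝ) : ℂ))⁻¹ * (((3 * p ^ 2 + p) / 8 : ℝ) : ℂ)
      = (((3 * p ^ 2 + p) / (3 * p ^ 2 + 1) : ℝ) : ℂ) := by
    rw [← Complex.ofReal_inv, ← Complex.ofReal_mul, Complex.ofReal_inj]
    field_simp
  have e2 : ((((3 * p ^ 2 + 1) / 8 : ℝ) : ℂ))⁻¹ * (((p - p ^ 2) / 8 : ℝ) : ℂ)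
      = (((p - p ^ 2) / (3 * p ^ 2 + 1) : ℝ) : ℂ) := by
    rw [← Complex.ofReal_inv, ← Complex.ofReal_mul, Complex.ofReal_inj]
    field_simp
  have e3 : ((((3 * p ^ 2 + 1) / 8 : ℝ) : ℂ))⁻¹ * ((((1 - p) ^ 2) / 64 : ℝ) : ℂ)
      = ((((1 - p) ^ 2) / (8 * (3 * p ^ 2 + 1)) : ℝ) : ℂ) := by
    rw [← Complex.ofReal_inv, ← Complex.ofReal_mul, Complex.ofReal_inj]
    field_simp
    ring
  rw [htr, key, smul_add, smul_add, smul_smul, smul_smul, smul_smul, e1, e2, e3]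
end
end

section
/- Let p ∈ [0,1], θ ∈ [0, π/2], φ ∈ ℝ. Consider the 4×4 matrix N = ((3p²+p)/(3p²+1))·u u† + ((p−p²)/(3p²+1))·v v† + ((1−p)²/(4(3p²+1)))·I₄, where u = cos θ·|00⟩ + sin θ·e^{−iφ}·|11⟩ and v = cos θ·|00⟩ − sin θ·e^{−iφ}·|11⟩ (this is the normalized state obtained by projecting the third qubit of the distilled noisy GHZ state onto cos θ·|0⟩ + sin θ·e^{iφ}·|1⟩). Then the partial transpose N^{T₂} is positive semidefinite if and only if (1−p)² ≥ 8p²·sin(2θ). -/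
open Matrix BigOperators ComplexOrder

noncomputable section

/-!
Write `N = a uu† + b vv† + d I`. The partial transpose moves the coherence `|00⟩⟨11|` of `N`
to `|01⟩⟨10|`, so `N^{T₂}` is diagonal on `|00⟩, |11⟩` and, on `span {|01⟩, |10⟩}`, equals `d I`
plus an off-diagonal entry of modulus `m = (a - b) cos θ sin θ`. Hence `N^{T₂}` is a real
combination of `w w†` over the orthogonal vectors `w = |00⟩, |11⟩, |01⟩ ± e^{-iφ}|10⟩`, and such a
combination is positive semidefinite exactly when every coefficient is nonnegative. The first
three coefficients are nonnegative for all `p`; the last, `(d - m)/2`, is a positive multiple of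
`(1 - p)² - 8p² sin 2θ`.
-/

open ComplexConjugate

theorem rankOne_eq_vecMulVec {n : Type*} (x : n → ℂ) : rankOne x = vecMulVec x (star x) := rfl

theorem posSemidef_sum_smul_rankOne_iff {ι n : Type*} [Fintype ι] [Fintype n]
    (r : ι → ℝ) (w : ι → n → ℂ) (horth : Pairwise fun i j => star (w i) ⬝ᵥ w j = 0)
    (hw : ∀ i, w i ≠ 0) :
    (∑ i, (r i : ℂ) • rankOne (w i)).PosSemidef ↔ ∀ i, 0 ≤ r i := by
  refine ⟨fun h i => ?_, fun h => posSemidef_sum _ fun i _ =>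
    (posSemidef_vecMulVec_self_star (w i)).smul (Complex.zero_le_real.mpr (h i))⟩
  have hform : star (w i) ⬝ᵥ (∑ j, (r j : ℂ) • rankOne (w j)) *ᵥ w i
      = r i * (star (w i) ⬝ᵥ w i) ^ 2 := by
    simp only [sum_mulVec, smul_mulVec, rankOne_eq_vecMulVec, vecMulVec_mulVec, dotProduct_sum,
      dotProduct_smul, op_smul_eq_mul, smul_eq_mul]
    rw [Finset.sum_eq_single i (fun j _ hji => by rw [horth hji]; ring) (by simp)]
    ring
  obtain ⟨t, ht, htq⟩ :=
    RCLike.pos_iff_exists_ofReal.mp (dotProduct_star_self_pos_iff.mpr (hw i))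
  have hnonneg := h.dotProduct_mulVec_nonneg (w i)
  rw [hform, ← htq] at hnonneg
  exact nonneg_of_mul_nonneg_left (Complex.zero_le_real.mp (by push_cast; exact hnonneg))
    (pow_pos ht 2)

def twoQubitVec (a₀₀ a₀₁ a₁₀ a₁₁ : ℂ) : Fin 2 × Fin 2 → ℂ :=
  fun x => ![![a₀₀, a₀₁], ![a₁₀, a₁₁]] x.1 x.2

theorem twoQubitVec_diag (a d : ℂ) :
    twoQubitVec a 0 0 d = fun x => if x = (0, 0) then a else if x = (1, 1) then d else 0 := by
  funext ⟨i, j⟩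
  fin_cases i <;> fin_cases j <;> simp [twoQubitVec]

def ptCoeffs (a b d c s : ℝ) : Fin 4 → ℝ :=
  ![(a + b) * c ^ 2 + d, (a + b) * s ^ 2 + d, (d + (a - b) * c * s) / 2, (d - (a - b) * c * s) / 2]

def ptEigenbasis (ζ : ℂ) : Fin 4 → Fin 2 × Fin 2 → ℂ :=
  ![twoQubitVec 1 0 0 0, twoQubitVec 0 0 0 1, twoQubitVec 0 1 ζ 0, twoQubitVec 0 1 (-ζ) 0]

section ptEigenbasis

variable {ζ : ℂ}

theorem ptEigenbasis_orthogonal (hζ : ζ * conj ζ = 1) :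
    Pairwise fun i j => star (ptEigenbasis ζ i) ⬝ᵥ ptEigenbasis ζ j = 0 := by
  intro i j hij
  fin_cases i <;> fin_cases j <;>
    simp [ptEigenbasis, twoQubitVec, dotProduct, Fintype.sum_prod_type] <;> grind

theorem ptEigenbasis_ne_zero (i : Fin 4) : ptEigenbasis ζ i ≠ 0 := by
  fin_cases i <;> simp [ptEigenbasis, twoQubitVec, funext_iff, Fin.forall_fin_two]

theorem pt2_smul_rankOne_add_smul_rankOne_add_smul_one (a b d c s : ℝ) (hζ : ζ * conj ζ = 1) :
    pt2 ((a : ℂ) • rankOne (twoQubitVec c 0 0 (s * ζ))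
        + (b : ℂ) • rankOne (twoQubitVec c 0 0 (-(s * ζ))) + (d : ℂ) • 1)
      = ∑ i, (ptCoeffs a b d c s i : ℂ) • rankOne (ptEigenbasis ζ i) := by
  ext ⟨i, j⟩ ⟨k, l⟩
  fin_cases i <;> fin_cases j <;> fin_cases k <;> fin_cases l <;>
    simp [pt2, rankOne, ptCoeffs, ptEigenbasis, twoQubitVec, Fin.sum_univ_four,
      Matrix.one_apply] <;>
    grind

end ptEigenbasis

theorem distilled_diag_coeff_eq (p x y : ℝ) (hxy : x ^ 2 + y ^ 2 = 1) :
    ((3 * p ^ 2 + p) / (3 * p ^ 2 + 1) + (p - p ^ 2) / (3 * p ^ 2 + 1)) * x ^ 2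
      + (1 - p) ^ 2 / (4 * (3 * p ^ 2 + 1))
      = ((3 * p + 1) ^ 2 * x ^ 2 + (1 - p) ^ 2 * y ^ 2) / (4 * (3 * p ^ 2 + 1)) := by
  field_simp
  linear_combination (-(1 - p) ^ 2) * hxy

theorem ptCoeffs_distilled_nonneg_iff (p θ : ℝ) (hθ0 : 0 ≤ θ) (hθ1 : θ ≤ Real.pi / 2) :
    (∀ i, 0 ≤ ptCoeffs ((3 * p ^ 2 + p) / (3 * p ^ 2 + 1)) ((p - p ^ 2) / (3 * p ^ 2 + 1))
      ((1 - p) ^ 2 / (4 * (3 * p ^ 2 + 1))) (Real.cos θ) (Real.sin θ) i)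
      ↔ (1 - p) ^ 2 ≥ 8 * p ^ 2 * Real.sin (2 * θ) := by
  set c := Real.cos θ
  set s := Real.sin θ
  have hc : 0 ≤ c := Real.cos_nonneg_of_mem_Icc ⟨by linarith [Real.pi_pos], hθ1⟩
  have hs : 0 ≤ s := Real.sin_nonneg_of_nonneg_of_le_pi hθ0 (by linarith)
  have hcs : c ^ 2 + s ^ 2 = 1 := Real.cos_sq_add_sin_sq θ
  simp only [ptCoeffs, Fin.forall_fin_succ, IsEmpty.forall_iff, Fin.isValue, cons_val_zero,
    cons_val_succ, and_true]
  have hγ : ((1 - p) ^ 2 / (4 * (3 * p ^ 2 + 1))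
      + ((3 * p ^ 2 + p) / (3 * p ^ 2 + 1) - (p - p ^ 2) / (3 * p ^ 2 + 1)) * c * s) / 2
      = ((1 - p) ^ 2 + 16 * p ^ 2 * c * s) / (8 * (3 * p ^ 2 + 1)) := by
    field_simp
    ring
  have hδ : ((1 - p) ^ 2 / (4 * (3 * p ^ 2 + 1))
      - ((3 * p ^ 2 + p) / (3 * p ^ 2 + 1) - (p - p ^ 2) / (3 * p ^ 2 + 1)) * c * s) / 2
      = ((1 - p) ^ 2 - 8 * p ^ 2 * Real.sin (2 * θ)) / (8 * (3 * p ^ 2 + 1)) := by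
    rw [Real.sin_two_mul]
    field_simp
    ring
  rw [distilled_diag_coeff_eq p c s hcs, distilled_diag_coeff_eq p s c (by linarith), hγ, hδ,
    ge_iff_le]
  refine ⟨fun h => ?_, fun h => ⟨by positivity, by positivity, by positivity,
    div_nonneg (sub_nonneg.2 h) (by positivity)⟩⟩
  simpa using (le_div_iff₀ (by positivity)).1 h.2.2.2

theorem pt_distilled_localized_posSemidef_iff_general (p θ φ : ℝ)
    (hθ0 : 0 ≤ θ) (hθ1 : θ ≤ Real.pi / 2)
    (u v : Fin 2 × Fin 2 → ℂ)
    (hu : u = fun x => if x = (0, 0) then (Real.cos θ : ℂ)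
      else if x = (1, 1) then (Real.sin θ : ℂ) * Complex.exp (-(Complex.I * (φ : ℂ))) else 0)
    (hv : v = fun x => if x = (0, 0) then (Real.cos θ : ℂ)
      else if x = (1, 1) then -((Real.sin θ : ℂ) * Complex.exp (-(Complex.I * (φ : ℂ)))) else 0)
    (N : Matrix (Fin 2 × Fin 2) (Fin 2 × Fin 2) ℂ)
    (hN : N = (((3 * p ^ 2 + p) / (3 * p ^ 2 + 1) : ℝ) : ℂ) • rankOne u
        + (((p - p ^ 2) / (3 * p ^ 2 + 1) : ℝ) : ℂ) • rankOne v
        + ((((1 - p) ^ 2) / (4 * (3 * p ^ 2 + 1)) : ℝ) : ℂ) • 1) :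
    (pt2 N).PosSemidef ↔ (1 - p) ^ 2 ≥ 8 * p ^ 2 * Real.sin (2 * θ) := by
  have hζ : Complex.exp (-(Complex.I * φ)) * conj (Complex.exp (-(Complex.I * φ))) = 1 := by
    rw [Complex.mul_conj, Complex.normSq_eq_norm_sq,
      show -(Complex.I * φ) = Complex.I * ((-φ : ℝ) : ℂ) by push_cast; ring,
      Complex.norm_exp_I_mul_ofReal]
    norm_num
  rw [← twoQubitVec_diag] at hu hv
  rw [hN, hu, hv, pt2_smul_rankOne_add_smul_rankOne_add_smul_one _ _ _ _ _ hζ,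
    posSemidef_sum_smul_rankOne_iff _ _ (ptEigenbasis_orthogonal hζ) ptEigenbasis_ne_zero]
  exact ptCoeffs_distilled_nonneg_iff p θ hθ0 hθ1

/-- For the normalized state obtained by projecting the third qubit of the distilled
noisy GHZ state onto `cos θ |0⟩ + sin θ e^{iφ} |1⟩`, namely
`N = ((3p²+p)/(3p²+1)) u u† + ((p-p²)/(3p²+1)) v v† + ((1-p)²/(4(3p²+1))) I₄`
with `u = cos θ |00⟩ + sin θ e^{-iφ} |11⟩`, `v = cos θ |00⟩ - sin θ e^{-iφ} |11⟩`,
the partial transpose `N^{T₂}` is positive semidefinite iff `(1-p)² ≥ 8p² sin(2θ)`. -/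
theorem pt_distilled_localized_posSemidef_iff (p θ φ : ℝ)
    (hp0 : 0 ≤ p) (hp1 : p ≤ 1) (hθ0 : 0 ≤ θ) (hθ1 : θ ≤ Real.pi / 2)
    (u v : Fin 2 × Fin 2 → ℂ)
    (hu : u = fun x => if x = (0, 0) then (Real.cos θ : ℂ)
      else if x = (1, 1) then (Real.sin θ : ℂ) * Complex.exp (-(Complex.I * (φ : ℂ))) else 0)
    (hv : v = fun x => if x = (0, 0) then (Real.cos θ : ℂ)
      else if x = (1, 1) then -((Real.sin θ : ℂ) * Complex.exp (-(Complex.I * (φ : ℂ)))) else 0)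
    (N : Matrix (Fin 2 × Fin 2) (Fin 2 × Fin 2) ℂ)
    (hN : N = (((3 * p ^ 2 + p) / (3 * p ^ 2 + 1) : ℝ) : ℂ) • rankOne u
        + (((p - p ^ 2) / (3 * p ^ 2 + 1) : ℝ) : ℂ) • rankOne v
        + ((((1 - p) ^ 2) / (4 * (3 * p ^ 2 + 1)) : ℝ) : ℂ) • 1) :
    (pt2 N).PosSemidef ↔ (1 - p) ^ 2 ≥ 8 * p ^ 2 * Real.sin (2 * θ) :=
  pt_distilled_localized_posSemidef_iff_general p θ φ hθ0 hθ1 u v hu hv N hN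
end
end

section
/- For every real p with (4√3 − 3)/13 < p < 3/7, both of the following hold: (1 + 7p)/8 < 1/2 and (25p² + 6p + 1)/(8(3p² + 1)) > 1/2. (The first quantity is the GHZ fidelity of the noisy GHZ state ρ_noise(p), the second is the GHZ fidelity of the distilled state ρ'_noise(p); thus on this interval the fidelity is raised above the genuine-multipartite-entanglement witness threshold 1/2 by distillation.) -/
/-- On the interval `(4√3-3)/13 < p < 3/7`, the GHZ fidelity of the noisy GHZ state is
below 1/2 while that of the distilled state is above 1/2. -/
theorem fidelity_raised_by_distillation (p : ℝ)
    (hlo : (4 * Real.sqrt 3 - 3) / 13 < p) (hhi : p < 3 / 7) :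
    (1 + 7 * p) / 8 < 1 / 2 ∧
    (25 * p ^ 2 + 6 * p + 1) / (8 * (3 * p ^ 2 + 1)) > 1 / 2 := by
  have hs : Real.sqrt 3 ^ 2 = 3 := Real.sq_sqrt (by norm_num)
  have hs1 : (1:ℝ) < Real.sqrt 3 := by
    nlinarith [Real.sqrt_nonneg 3]
  constructor
  · linarith
  · have hden : 0 < 8 * (3 * p ^ 2 + 1) := by positivity
    rw [gt_iff_lt, div_lt_div_iff₀ (by norm_num) hden]
    nlinarith [sq_nonneg (13 * p + 3 - 4 * Real.sqrt 3), Real.sqrt_nonneg 3]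
end
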